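/- Suppose the finite simplicial graph Γ has no SIL. Then for every equivalence class X and every X-component C, the subgroup A^X_C of Out(A_Γ) generated by the images of the partial conjugations in the set P^X_C is a normal subgroup of SOut⁰(A_Γ). -/

import Mathlib

open SimpleGraph

namespace RaagPaper

/-- The star of a vertex: the vertex together with its neighbours. -/
def star {V : Type} (G : SimpleGraph V) (v : V) : Set V := insert v (G.neighborSet v)

/-- Domination: `u ≤ v` iff `lk(u) ⊆ st(v)`. -/
def Dom {V : Type} (G : SimpleGraph V) (u v : V) : Prop := G.neighborSet u ⊆ star G v

/-- Domination-equivalence of vertices. -/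
def EquivDom {V : Type} (G : SimpleGraph V) (u v : V) : Prop := Dom G u v ∧ Dom G v u

/-- The domination-equivalence class of a vertex. -/
def eqClass {V : Type} (G : SimpleGraph V) (x : V) : Set V := {v | EquivDom G v x}

/-- `C` is (the vertex set of) a connected component of the subgraph of `G` induced on `S`. -/
def IsCC {V : Type} (G : SimpleGraph V) (S : Set V) (C : Set V) : Prop :=
  ∃ v : S, C = {w : V | ∃ h : w ∈ S, (G.induce S).Reachable ⟨w, h⟩ v}

/-- `(x,y|z)` is a separating intersection of links (SIL). -/
def IsSIL {V : Type} (G : SimpleGraph V) (x y z : V) : Prop :=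
  x ≠ y ∧ x ≠ z ∧ y ≠ z ∧ ¬ G.Adj x y ∧ ¬ G.Adj x z ∧ ¬ G.Adj y z ∧
  ∀ C : Set V, IsCC G ((G.neighborSet x ∩ G.neighborSet y)ᶜ) C → z ∈ C → x ∉ C ∧ y ∉ C

/-- The graph has no SIL. -/
def HasNoSIL {V : Type} (G : SimpleGraph V) : Prop := ∀ x y z, ¬ IsSIL G x y z

/-- `D` is a (possibly empty) union of connected components of `Γ ∖ st(x)`. -/
def IsUnionCC {V : Type} (G : SimpleGraph V) (x : V) (D : Set V) : Prop :=
  ∃ 𝒞 : Set (Set V), (∀ C ∈ 𝒞, IsCC G ((star G x)ᶜ) C) ∧ D = ⋃₀ 𝒞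


/-- Defining relators of the RAAG: commutators of adjacent vertices. -/
def Rels {V : Type} (G : SimpleGraph V) : Set (FreeGroup V) :=
  {r | ∃ u v : V, G.Adj u v ∧
    r = FreeGroup.of u * FreeGroup.of v * (FreeGroup.of u)⁻¹ * (FreeGroup.of v)⁻¹}

/-- The right-angled Artin group on `G`. -/
abbrev Raag {V : Type} (G : SimpleGraph V) : Type := PresentedGroup (Rels G)

/-- The generator of `Raag G` corresponding to a vertex. -/
def gen {V : Type} (G : SimpleGraph V) (v : V) : Raag G := PresentedGroup.of v

/-- `φ` is the partial conjugation conjugating the vertices of `C` by `x`. -/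
def IsPartialConj {V : Type} (G : SimpleGraph V) (x : V) (C : Set V)
    (φ : MulAut (Raag G)) : Prop :=
  (∀ v ∈ C, φ (gen G v) = (gen G x)⁻¹ * gen G v * gen G x) ∧
  (∀ v ∉ C, φ (gen G v) = gen G v)

/-- `φ` is the transvection `R_u^v`, sending `u ↦ uv` and fixing all other vertices. -/
def IsTransvection {V : Type} (G : SimpleGraph V) (u v : V)
    (φ : MulAut (Raag G)) : Prop :=
  φ (gen G u) = gen G u * gen G v ∧ ∀ w : V, w ≠ u → φ (gen G w) = gen G w

/-- The subgroup of inner automorphisms of a group. -/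
def Inn (H : Type*) [Group H] : Subgroup (MulAut H) := (MulAut.conj : H →* MulAut H).range

instance Inn.normal (H : Type*) [Group H] : (Inn H).Normal := by
  constructor
  rintro a ⟨g, rfl⟩ f
  refine ⟨f g, ?_⟩
  ext x
  simp [MulAut.conj_apply, map_mul, map_inv]

/-- The outer automorphism group. -/
abbrev Out (H : Type*) [Group H] : Type _ := MulAut H ⧸ Inn H

/-- Projection from automorphisms to outer automorphisms. -/
def toOut (H : Type*) [Group H] : MulAut H →* Out H := QuotientGroup.mk' (Inn H)

/-- The homomorphism sending an automorphism to the induced automorphism of the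
abelianization. -/
def abAut (H : Type*) [Group H] : MulAut H →* MulAut (Abelianization H) where
  toFun e := MulEquiv.abelianizationCongr e
  map_one' := by
    apply MulEquiv.toMonoidHom_injective
    apply Abelianization.hom_ext
    ext x
    simp [abelianizationCongr_of]
  map_mul' f g := by
    apply MulEquiv.toMonoidHom_injective
    apply Abelianization.hom_ext
    ext x
    simp [abelianizationCongr_of, MulAut.mul_apply]

lemma abAut_inn (H : Type*) [Group H] : ∀ a ∈ Inn H, abAut H a = 1 := by
  rintro a ⟨g, rfl⟩
  apply MulEquiv.toMonoidHom_injective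
  apply Abelianization.hom_ext
  ext x
  simp [abAut, abelianizationCongr_of, MulAut.conj_apply, mul_comm]

/-- The standard map `ρ : Out(H) → Aut(Hᵃᵇ)` induced by acting on the abelianization. -/
def rhoOut (H : Type*) [Group H] : Out H →* MulAut (Abelianization H) :=
  QuotientGroup.lift (Inn H) (abAut H) (abAut_inn H)

end RaagPaper

namespace RaagPaper

/-- The generating set of `SOut⁰(A_Γ)`: images of all transvections and all partial
conjugations. -/
def SOutGens {V : Type} (G : SimpleGraph V) : Set (Out (Raag G)) :=
  {o | ∃ φ : MulAut (Raag G), o = toOut (Raag G) φ ∧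
    ((∃ u v : V, u ≠ v ∧ Dom G u v ∧ IsTransvection G u v φ) ∨
     (∃ (x : V) (C : Set V), IsUnionCC G x C ∧ IsPartialConj G x C φ))}

/-- `SOut⁰(A_Γ)`, the subgroup of `Out(A_Γ)` generated by the images of all
transvections and all partial conjugations. -/
def SOut0 {V : Type} (G : SimpleGraph V) : Subgroup (Out (Raag G)) :=
  Subgroup.closure (SOutGens G)

/-- The set `P^X_C` of images of the partial conjugations `π^w_{C∖st(w)}` over all
vertices `w` dominating every element of `X`. -/
def PXC {V : Type} (G : SimpleGraph V) (X C : Set V) : Set (Out (Raag G)) :=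
  {o | ∃ (w : V) (φ : MulAut (Raag G)), (∀ x ∈ X, Dom G x w) ∧
    IsPartialConj G w (C \ star G w) φ ∧ o = toOut (Raag G) φ}

end RaagPaper

/-!
It suffices to check that conjugating a generator `π^w_{C∖st(w)}` of `A^X_C` by a generator of
`SOut⁰(A_Γ)` or by its inverse stays in `A^X_C`. Without SILs, two unions of components `E` (of
`y`) and `D` (of `w`) with `w ∉ E` are either disjoint or nested, so `π^y_E` and `π^w_D` commute;
if `w ∈ E`, replace `π^y_E` by the partial conjugation on the complementary `y`-components, its
inverse in `Out(A_Γ)`. Likewise a transvection `R_u^v` with `u ≠ w` commutes with `π^w_{C∖st(w)}`,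
because no SIL lets `u` and `v` be separated by `C ∖ st(w)` unless `v ∈ st(w)`. Finally, with
`D = C ∖ st(w)`, `R_w^v π^w_D (R_w^v)⁻¹` is `π^v_{D ∪ {w}} π^w_D` or `π^w_D π^v_D`, and up to an
inner automorphism the new factor is `π^v_{C∖st(v)} ∈ P^X_C`, since `v` dominates `w` and hence
all of `X`.
-/

namespace RaagPaper

variable {V : Type} {G : SimpleGraph V}

section Conjugation

variable {Γ : Type*} [Group Γ] {H : Subgroup Γ} {T P A B : Γ}

lemma toOut_conj (g : Γ) : toOut Γ (MulAut.conj g) = 1 :=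
  (QuotientGroup.eq_one_iff _).mpr ⟨g, rfl⟩

lemma conj_mem_of_commute (h : Commute T P) (hP : P ∈ H) :
    T * P * T⁻¹ ∈ H ∧ T⁻¹ * P * T ∈ H := by
  rw [h.mul_inv_cancel, h.inv_mul_cancel]
  exact ⟨hP, hP⟩

lemma conj_mem_of_mul_eq (hP : P ∈ H) (hA : A ∈ H) (hB : B ∈ H) (hTA : Commute T A)
    (hTB : Commute T B) (h : T * P = A * P * B * T) : T * P * T⁻¹ ∈ H ∧ T⁻¹ * P * T ∈ H := by
  have h' : T * P * T⁻¹ = A * P * B := by rw [h]; group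
  have h'' : T⁻¹ * P * T = A⁻¹ * P * B⁻¹ := by
    calc T⁻¹ * P * T = T⁻¹ * (A⁻¹ * (T * P * T⁻¹) * B⁻¹) * T := by rw [h']; group
      _ = T⁻¹ * A⁻¹ * T * P * (T⁻¹ * B⁻¹ * T) := by group
      _ = A⁻¹ * P * B⁻¹ := by rw [hTA.inv_inv.eq, hTB.inv_inv.eq]; group
  rw [h', h'']
  exact ⟨mul_mem (mul_mem hA hP) hB, mul_mem (mul_mem (inv_mem hA) hP) (inv_mem hB)⟩

lemma mem_normalizer_closure {S : Set Γ}
    (h : ∀ P ∈ S, T * P * T⁻¹ ∈ Subgroup.closure S ∧ T⁻¹ * P * T ∈ Subgroup.closure S) :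
    T ∈ Subgroup.normalizer (Subgroup.closure S : Set Γ) := by
  have key : ∀ g : Γ, (∀ P ∈ S, g * P * g⁻¹ ∈ Subgroup.closure S) →
      ∀ x ∈ Subgroup.closure S, g * x * g⁻¹ ∈ Subgroup.closure S := fun g hg x hx =>
    (Subgroup.closure_le ((Subgroup.closure S).comap (MulAut.conj g).toMonoidHom)).mpr
      (fun P hP => hg P hP) hx
  refine Subgroup.mem_normalizer_iff.mpr fun x => ⟨key T (fun P hP => (h P hP).1) x, fun hx => ?_⟩
  simpa [mul_assoc] using key T⁻¹ (fun P hP => by simpa using (h P hP).2) _ hx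

end Conjugation

section Graph

variable {u v w x z : V}

lemma mem_star_iff : u ∈ star G v ↔ u = v ∨ G.Adj v u := Iff.rfl

lemma self_mem_star (v : V) : v ∈ star G v := Or.inl rfl

lemma mem_star_of_adj (h : G.Adj v u) : u ∈ star G v := Or.inr h

lemma ne_of_notMem_star (h : u ∉ star G v) : u ≠ v := fun e => h (Or.inl e)

lemma not_adj_of_notMem_star (h : u ∉ star G v) : ¬ G.Adj v u := fun e => h (Or.inr e)

lemma mem_star_comm : u ∈ star G v ↔ v ∈ star G u := by
  simp only [mem_star_iff, eq_comm, G.adj_comm]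

lemma Dom.trans (huv : Dom G u v) (hvw : Dom G v w) : Dom G u w := by
  intro z (hz : G.Adj u z)
  rcases huv hz with rfl | hvz
  · rcases hvw hz.symm with rfl | hwu
    · exact mem_star_of_adj hz
    · exact mem_star_comm.mp (huv hwu.symm)
  · exact hvw hvz

lemma Dom.neighborSet_subset (huv : Dom G u v) (hadj : ¬ G.Adj u v) :
    G.neighborSet u ⊆ G.neighborSet v := by
  intro q hq
  rcases huv hq with rfl | h
  · exact absurd hq hadj
  · exact h

lemma Dom.notMem_star (huv : Dom G u v) (hv : v ∉ star G w) (huw : u ≠ w) :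
    u ∉ star G w := by
  rintro (rfl | hwu)
  · exact huw rfl
  · exact hv (mem_star_comm.mp (huv hwu.symm))

lemma Dom.notMem_star_of_notMem_star (hxw : Dom G x w) (hv : v ∉ star G w)
    (hvx : v ≠ x) : v ∉ star G x := by
  rintro (rfl | hxv)
  · exact hvx rfl
  · exact hv (hxw hxv)

lemma mem_diff_star_iff_of_dom {C : Set V} (hwv : Dom G w v) (hz : z ∉ star G v)
    (hzw : z ≠ w) : z ∈ C \ star G v ↔ z ∈ C \ star G w :=
  ⟨fun h => ⟨h.1, hwv.notMem_star_of_notMem_star hz hzw⟩, fun h => ⟨h.1, hz⟩⟩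

end Graph

section Components

variable {S C : Set V} {a b : V}

lemma IsCC.subset (hC : IsCC G S C) : C ⊆ S := by
  obtain ⟨v, rfl⟩ := hC
  exact fun a ⟨ha, _⟩ => ha

lemma IsCC.mem_of_adj (hC : IsCC G S C) (ha : a ∈ C) (hb : b ∈ S) (hab : G.Adj a b) :
    b ∈ C := by
  obtain ⟨v, rfl⟩ := hC
  obtain ⟨haS, hav⟩ := ha
  exact ⟨hb, (SimpleGraph.Adj.reachable (by simpa using hab.symm)).trans hav⟩

lemma IsCC.subset_of_closed (hC : IsCC G S C) (ha : a ∈ C) {P : Set V} (haP : a ∈ P)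
    (hP : ∀ p ∈ P, ∀ q ∈ S, G.Adj p q → q ∈ P) : C ⊆ P := by
  obtain ⟨v, rfl⟩ := hC
  obtain ⟨haS, hav⟩ := ha
  have key : ∀ s : S, (G.induce S).Reachable ⟨a, haS⟩ s → s.1 ∈ P := by
    intro s hs
    rw [SimpleGraph.reachable_iff_reflTransGen] at hs
    induction hs with
    | refl => exact haP
    | tail _ hadj ih => exact hP _ ih _ (Subtype.prop _) (by simpa using hadj)
  rintro b ⟨hbS, hbv⟩
  exact key ⟨b, hbS⟩ (hav.trans hbv.symm)

lemma exists_isCC_mem (ha : a ∈ S) : ∃ C, IsCC G S C ∧ a ∈ C :=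
  ⟨_, ⟨⟨a, ha⟩, rfl⟩, ha, SimpleGraph.Reachable.refl _⟩

lemma IsCC.subset_singleton_of_dom {x w : V} (hC : IsCC G (star G x)ᶜ C)
    (hw : w ∈ C) (hwx : Dom G w x) : C ⊆ {w} :=
  hC.subset_of_closed hw rfl fun _ hp _ hq hpq => absurd (hwx (hp ▸ hpq)) hq

lemma IsCC.ne_of_mem {x v : V} (hC : IsCC G (star G x)ᶜ C) (hv : v ∈ C) : v ≠ x :=
  ne_of_notMem_star (hC.subset hv)

lemma IsCC.not_adj_of_mem {x v : V} (hC : IsCC G (star G x)ᶜ C) (hv : v ∈ C) :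
    ¬ G.Adj x v :=
  not_adj_of_notMem_star (hC.subset hv)

variable {y : V} {E : Set V}

lemma isUnionCC_iff :
    IsUnionCC G y E ↔ E ⊆ (star G y)ᶜ ∧ ∀ a ∈ E, ∀ b ∉ star G y, G.Adj a b → b ∈ E := by
  constructor
  · rintro ⟨𝒞, h𝒞, rfl⟩
    refine ⟨fun a ⟨C, hC, ha⟩ => (h𝒞 C hC).subset ha, ?_⟩
    rintro a ⟨C, hC, ha⟩ b hb hab
    exact ⟨C, hC, (h𝒞 C hC).mem_of_adj ha hb hab⟩
  · rintro ⟨hsub, hcl⟩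
    refine ⟨{C | IsCC G (star G y)ᶜ C ∧ C ⊆ E}, fun C h => h.1, ?_⟩
    ext a
    constructor
    · intro ha
      obtain ⟨C, hC, haC⟩ := exists_isCC_mem (hsub ha)
      exact ⟨C, ⟨hC, hC.subset_of_closed haC ha fun p hp q hq => hcl p hp q hq⟩, haC⟩
    · rintro ⟨C, ⟨-, hCE⟩, haC⟩
      exact hCE haC

lemma IsUnionCC.subset (hE : IsUnionCC G y E) : E ⊆ (star G y)ᶜ := (isUnionCC_iff.mp hE).1

lemma IsUnionCC.mem_of_adj (hE : IsUnionCC G y E) (ha : a ∈ E) (hb : b ∉ star G y)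
    (hab : G.Adj a b) : b ∈ E :=
  (isUnionCC_iff.mp hE).2 a ha b hb hab

lemma IsUnionCC.compl (hE : IsUnionCC G y E) : IsUnionCC G y ((star G y)ᶜ \ E) :=
  isUnionCC_iff.mpr ⟨Set.sdiff_subset, fun _ ha _ hb hab =>
    ⟨hb, fun hbE => ha.2 (hE.mem_of_adj hbE ha.1 hab.symm)⟩⟩

lemma isUnionCC_diff_star {x w : V} (hC : IsCC G (star G x)ᶜ C) (hxw : Dom G x w) :
    IsUnionCC G w (C \ star G w) := by
  refine isUnionCC_iff.mpr ⟨fun a ha => ha.2, fun a ha b hb hab => ⟨?_, hb⟩⟩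
  refine hC.mem_of_adj ha.1 ?_ hab
  rintro (rfl | hxb)
  · exact ha.2 (hxw hab.symm)
  · exact hb (hxw hxb)

lemma IsUnionCC.mem_of_adj_mem_star {w : V} {D : Set V} (hE : IsUnionCC G y E)
    (hD : IsUnionCC G w D) (hyw : y ∉ star G w) {p q : V} (hpD : p ∈ D) (hpE : p ∈ E)
    (hpq : G.Adj p q) (hq : q ∉ G.neighborSet y ∩ G.neighborSet w) (hqw : q ∈ star G w) :
    w ∈ E := by
  rcases hqw with rfl | hwq
  · exact absurd (mem_star_of_adj hpq.symm) (hD.subset hpD)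
  have hqy : q ∉ star G y := by
    rintro (rfl | hyq)
    · exact hyw (mem_star_of_adj hwq)
    · exact hq ⟨hyq, hwq⟩
  exact hE.mem_of_adj (hE.mem_of_adj hpE hqy hpq) (fun h => hyw (mem_star_comm.mp h)) hwq.symm

end Components

namespace HasNoSIL

variable {x y w u v z : V} {C D E : Set V}

lemma not_neighborSet_subset_inter (hG : HasNoSIL G) {a b : V} (hab : a ≠ b)
    (hadj : ¬ G.Adj a b) (hua : u ≠ a) (hub : u ≠ b) :
    ¬ G.neighborSet u ⊆ G.neighborSet a ∩ G.neighborSet b := by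
  intro hlk
  refine hG a b u ⟨hab, hua.symm, hub.symm, hadj, fun h => G.irrefl (hlk h.symm).1,
    fun h => G.irrefl (hlk h.symm).2, fun C₀ hC₀ hu => ?_⟩
  have hC₀u : C₀ ⊆ {u} :=
    hC₀.subset_of_closed hu rfl fun _ hp _ hq hpq => absurd (hlk (hp ▸ hpq)) hq
  exact ⟨fun ha => hua (hC₀u ha).symm, fun hb => hub (hC₀u hb).symm⟩

lemma mem_isCC_iff_of_neighborSet_subset (hG : HasNoSIL G) (hC : IsCC G (star G x)ᶜ C)
    (hu : u ∉ star G x) (hv : v ∉ star G x) (hlk : G.neighborSet u ⊆ G.neighborSet v) :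
    u ∈ C ↔ v ∈ C := by
  rcases eq_or_ne u v with rfl | huv
  · rfl
  by_cases hux : G.neighborSet u ⊆ G.neighborSet x
  · refine absurd (Set.subset_inter hlk hux) (hG.not_neighborSet_subset_inter ?_ ?_ huv ?_)
    · exact ne_of_notMem_star hv
    · exact fun h => not_adj_of_notMem_star hv h.symm
    · exact ne_of_notMem_star hu
  obtain ⟨q, hqu, hqx⟩ := Set.not_subset.mp hux
  have hq : q ∉ star G x := by
    rintro (hqx' | hxq)
    · exact hu (mem_star_of_adj (hqx' ▸ hqu).symm)
    · exact hqx hxq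
  have hqv : G.Adj v q := hlk hqu
  exact ⟨fun huC => hC.mem_of_adj (hC.mem_of_adj huC hq hqu) hv hqv.symm,
    fun hvC => hC.mem_of_adj (hC.mem_of_adj hvC hq hqv) hu hqu.symm⟩

lemma mem_isCC_iff_of_dom (hG : HasNoSIL G) (hC : IsCC G (star G x)ᶜ C) (huv : Dom G u v)
    (hu : u ∉ star G x) (hv : v ∉ star G x) : u ∈ C ↔ v ∈ C := by
  by_cases hadj : G.Adj u v
  · exact ⟨fun h => hC.mem_of_adj h hv hadj, fun h => hC.mem_of_adj h hu hadj.symm⟩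
  · exact hG.mem_isCC_iff_of_neighborSet_subset hC hu hv (huv.neighborSet_subset hadj)

lemma mem_isCC_of_dom_of_mem_right (hG : HasNoSIL G) (hC : IsCC G (star G x)ᶜ C)
    (huv : Dom G u v) (hv : v ∈ C) (hux : u ≠ x) : u ∈ C :=
  (hG.mem_isCC_iff_of_dom hC huv (huv.notMem_star (hC.subset hv) hux) (hC.subset hv)).mpr hv

lemma mem_isCC_of_dom_of_mem_left (hG : HasNoSIL G) (hC : IsCC G (star G x)ᶜ C)
    (huv : Dom G u v) (hu : u ∈ C) (hv : v ∉ star G x) : v ∈ C :=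
  (hG.mem_isCC_iff_of_dom hC huv (hC.subset hu) hv).mp hu

lemma mem_star_of_mem_of_dom_of_dom (hG : HasNoSIL G) (hC : IsCC G (star G x)ᶜ C) (hxv : Dom G x v)
    (hv : v ∈ C) (hxw : Dom G x w) (hx : x ∉ star G w) : v ∈ star G w := by
  by_contra hvw
  refine hG.not_neighborSet_subset_inter (ne_of_notMem_star hvw)
    (fun h => not_adj_of_notMem_star hvw h.symm) (hC.ne_of_mem hv).symm
    (ne_of_notMem_star hx) (Set.subset_inter ?_ ?_)
  · exact hxv.neighborSet_subset fun h => hC.not_adj_of_mem hv h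
  · exact hxw.neighborSet_subset fun h => hx (mem_star_of_adj h.symm)

lemma mem_star_of_mem_of_dom_trans (hG : HasNoSIL G) (hC : IsCC G (star G x)ᶜ C) (hux : Dom G u x)
    (hu : u ∈ C) (hxw : Dom G x w) (hx : x ∉ star G w) : u ∈ star G w := by
  by_contra huw
  refine hG.not_neighborSet_subset_inter (ne_of_notMem_star hx)
    (fun h => not_adj_of_notMem_star hx h.symm) (hC.ne_of_mem hu)
    (ne_of_notMem_star huw) (Set.subset_inter ?_ ?_)
  · exact hux.neighborSet_subset fun h => hC.not_adj_of_mem hu h.symm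
  · exact (hux.neighborSet_subset fun h => hC.not_adj_of_mem hu h.symm).trans
      (hxw.neighborSet_subset fun h => hx (mem_star_of_adj h.symm))

lemma mem_isCC_of_notMem_star (hG : HasNoSIL G) (hC : IsCC G (star G x)ᶜ C)
    (hxv : Dom G x v) (hv : v ∈ C) (hzv : z ∉ star G v) (hzx : z ≠ x) : z ∈ C := by
  have hxv' : ¬ G.Adj x v := hC.not_adj_of_mem hv
  have hlk := hxv.neighborSet_subset hxv'
  have hz : z ∉ star G x := by
    rintro (h | hxz)
    · exact hzx h
    · exact hzv (mem_star_of_adj (hlk hxz))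
  by_contra hzC
  refine hG v x z ⟨hC.ne_of_mem hv, (ne_of_notMem_star hzv).symm, hzx.symm,
    fun h => hxv' h.symm, fun h => hzv (mem_star_of_adj h), fun h => hz (mem_star_of_adj h),
    fun C₀ hC₀ hz₀ => ?_⟩
  have hsub : C₀ ⊆ (star G x)ᶜ \ C := by
    refine hC₀.subset_of_closed hz₀ ⟨hz, hzC⟩ fun p hp q hq hpq => ⟨?_, ?_⟩
    · rintro (rfl | hxq)
      · exact hp.1 (mem_star_of_adj hpq.symm)
      · exact hq ⟨hlk hxq, hxq⟩
    · exact fun hqC => hp.2 (hC.mem_of_adj hqC hp.1 hpq.symm)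
  exact ⟨fun h => (hsub h).2 hv, fun h => (hsub h).1 (self_mem_star x)⟩

lemma disjoint_of_notMem (hG : HasNoSIL G) (hyw : y ∉ star G w) (hE : IsUnionCC G y E)
    (hD : IsUnionCC G w D) (hwE : w ∉ E) (hyD : y ∉ D) : Disjoint E D := by
  have hwy : w ∉ star G y := fun h => hyw (mem_star_comm.mp h)
  refine Set.disjoint_left.mpr fun z hzE hzD => ?_
  have hzy : z ∉ star G y := hE.subset hzE
  have hzw : z ∉ star G w := hD.subset hzD
  refine hG y w z ⟨ne_of_notMem_star hyw, (ne_of_notMem_star hzy).symm,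
    (ne_of_notMem_star hzw).symm, fun h => hwy (mem_star_of_adj h),
    not_adj_of_notMem_star hzy, not_adj_of_notMem_star hzw, fun C₀ hC₀ hz₀ => ?_⟩
  have hsub : C₀ ⊆ E ∩ D := by
    refine hC₀.subset_of_closed hz₀ ⟨hzE, hzD⟩ fun p ⟨hpE, hpD⟩ q hq hpq => ?_
    by_cases hqw : q ∈ star G w
    · exact absurd (hE.mem_of_adj_mem_star hD hyw hpD hpE hpq hq hqw) hwE
    by_cases hqy : q ∈ star G y
    · exact absurd (hD.mem_of_adj_mem_star hE hwy hpE hpD hpq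
        (fun h => hq ⟨h.2, h.1⟩) hqy) hyD
    exact ⟨hE.mem_of_adj hpE hqy hpq, hD.mem_of_adj hpD hqw hpq⟩
  exact ⟨fun h => hE.subset (hsub h).1 (self_mem_star y), fun h => hwE (hsub h).1⟩

lemma subset_of_mem (hG : HasNoSIL G) (hyw : y ∉ star G w) (hE : IsUnionCC G y E)
    (hD : IsUnionCC G w D) (hwE : w ∉ E) (hyD : y ∈ D) : E ⊆ D := by
  intro z hz
  have hzw : z ∉ star G w := by
    rintro (rfl | hwz)
    · exact hwE hz
    · exact hwE (hE.mem_of_adj hz (fun h => hyw (mem_star_comm.mp h)) hwz.symm)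
  by_contra hzD
  exact Set.disjoint_left.mp (hG.disjoint_of_notMem hyw hE hD.compl hwE fun h => h.2 hyD)
    hz ⟨hzw, hzD⟩

end HasNoSIL

lemma gen_commute {u v : V} (h : G.Adj u v) : Commute (gen G u) (gen G v) := by
  have h1 := PresentedGroup.one_of_mem (rels := Rels G) ⟨u, v, h, rfl⟩
  simp only [map_mul, map_inv] at h1
  exact commutatorElement_eq_one_iff_commute.mp h1

lemma commute_gen_of_mem_star {u w : V} (h : u ∈ star G w) : Commute (gen G w) (gen G u) := by
  rcases h with rfl | h
  · exact Commute.refl _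
  · exact gen_commute h

lemma mulAut_ext {φ ψ : MulAut (Raag G)} (h : ∀ v, φ (gen G v) = ψ (gen G v)) : φ = ψ :=
  MulEquiv.toMonoidHom_injective (PresentedGroup.ext h)

lemma exists_hom_partialConj {w : V} {S : Set V} (hS : IsUnionCC G w S) (c : Raag G)
    (hc : ∀ b ∈ star G w, Commute c (gen G b)) :
    ∃ Φ : Raag G →* Raag G, (∀ v ∈ S, Φ (gen G v) = c⁻¹ * gen G v * c) ∧
      ∀ v ∉ S, Φ (gen G v) = gen G v := by
  classical
  let f : V → Raag G := fun v => if v ∈ S then c⁻¹ * gen G v * c else gen G v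
  have hcl : ∀ a ∈ S, ∀ b, G.Adj a b → b ∉ S → Commute c (gen G b) := fun a ha b hab hb =>
    hc b (by_contra fun hbw => hb (hS.mem_of_adj ha hbw hab))
  have hf : ∀ u v, G.Adj u v → Commute (f u) (f v) := by
    intro u v huv
    simp only [f]
    split_ifs with hu hv hv
    · simpa using (gen_commute huv).conj c⁻¹
    · exact ((hcl u hu v huv hv).inv_left.mul_left (gen_commute huv)).mul_left (hcl u hu v huv hv)
    · exact (((hcl v hv u huv.symm hu).inv_left.mul_left (gen_commute huv.symm)).mul_left
        (hcl v hv u huv.symm hu)).symm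
    · exact gen_commute huv
  have hrel : ∀ r ∈ Rels G, FreeGroup.lift f r = 1 := by
    rintro _ ⟨u, v, huv, rfl⟩
    simp only [map_mul, map_inv, FreeGroup.lift_apply_of]
    rw [(hf u v huv).eq]
    group
  refine ⟨PresentedGroup.toGroup hrel, fun v hv => ?_, fun v hv => ?_⟩
  · exact (PresentedGroup.toGroup.of hrel).trans (if_pos hv)
  · exact (PresentedGroup.toGroup.of hrel).trans (if_neg hv)

lemma exists_isPartialConj {w : V} {S : Set V} (hS : IsUnionCC G w S) :
    ∃ φ : MulAut (Raag G), IsPartialConj G w S φ := by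
  obtain ⟨Φ, hΦS, hΦ⟩ :=
    exists_hom_partialConj hS (gen G w) fun b hb => commute_gen_of_mem_star hb
  obtain ⟨Ψ, hΨS, hΨ⟩ :=
    exists_hom_partialConj hS (gen G w)⁻¹ fun b hb => (commute_gen_of_mem_star hb).inv_left
  have hw : w ∉ S := fun h => hS.subset h (self_mem_star w)
  have h1 : Ψ.comp Φ = MonoidHom.id _ := PresentedGroup.ext fun v => by
    change Ψ (Φ (gen G v)) = gen G v
    by_cases hv : v ∈ S
    · rw [hΦS v hv, map_mul, map_mul, map_inv, hΨS v hv, hΨ w hw]; group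
    · rw [hΦ v hv, hΨ v hv]
  have h2 : Φ.comp Ψ = MonoidHom.id _ := PresentedGroup.ext fun v => by
    change Φ (Ψ (gen G v)) = gen G v
    by_cases hv : v ∈ S
    · rw [hΨS v hv, map_mul, map_mul, map_inv, map_inv, hΦS v hv, hΦ w hw]; group
    · rw [hΨ v hv, hΦ v hv]
  exact ⟨MonoidHom.toMulEquiv Φ Ψ h1 h2, hΦS, hΦ⟩

namespace IsPartialConj

variable {w v : V} {S S' : Set V} {φ ψ : MulAut (Raag G)}

lemma apply_of_mem (hφ : IsPartialConj G w S φ) (hv : v ∈ S) :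
    φ (gen G v) = (gen G w)⁻¹ * gen G v * gen G w :=
  hφ.1 v hv

lemma apply_of_notMem (hφ : IsPartialConj G w S φ) (hv : v ∉ S) : φ (gen G v) = gen G v :=
  hφ.2 v hv

lemma apply_of_mem_star (hφ : IsPartialConj G w S φ) (hv : v ∈ star G w) :
    φ (gen G v) = gen G v := by
  by_cases h : v ∈ S
  · rw [hφ.apply_of_mem h, (commute_gen_of_mem_star hv).inv_mul_cancel]
  · exact hφ.apply_of_notMem h

lemma apply_self (hφ : IsPartialConj G w S φ) : φ (gen G w) = gen G w :=
  hφ.apply_of_mem_star (self_mem_star w)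

lemma congr_set (hφ : IsPartialConj G w S φ) (h : ∀ v ∉ star G w, v ∈ S ↔ v ∈ S') :
    IsPartialConj G w S' φ := by
  refine ⟨fun v hv => ?_, fun v hv => ?_⟩
  · by_cases hvw : v ∈ star G w
    · rw [hφ.apply_of_mem_star hvw, (commute_gen_of_mem_star hvw).inv_mul_cancel]
    · exact hφ.apply_of_mem ((h v hvw).mpr hv)
  · by_cases hvw : v ∈ star G w
    · exact hφ.apply_of_mem_star hvw
    · exact hφ.apply_of_notMem fun h' => hv ((h v hvw).mp h')

lemma unique (hφ : IsPartialConj G w S φ) (hψ : IsPartialConj G w S ψ) : φ = ψ :=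
  mulAut_ext fun v => by
    by_cases hv : v ∈ S
    · rw [hφ.apply_of_mem hv, hψ.apply_of_mem hv]
    · rw [hφ.apply_of_notMem hv, hψ.apply_of_notMem hv]

lemma of_conj (hS : ∀ v ∉ star G w, v ∈ S) :
    IsPartialConj G w S (MulAut.conj (gen G w)⁻¹) := by
  refine ⟨fun v _ => by rw [MulAut.conj_apply, inv_inv], fun v hv => ?_⟩
  have hvw : v ∈ star G w := by_contra fun h => hv (hS v h)
  rw [MulAut.conj_apply, inv_inv, (commute_gen_of_mem_star hvw).inv_mul_cancel]

lemma toOut_eq_one (hφ : IsPartialConj G w S φ) (hS : ∀ v ∉ star G w, v ∈ S) :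
    toOut (Raag G) φ = 1 := by
  rw [hφ.unique (of_conj hS), toOut_conj]

lemma eq_one (hφ : IsPartialConj G w S φ) (hS : S ⊆ star G w) : φ = 1 :=
  mulAut_ext fun v => by
    by_cases hv : v ∈ S
    · exact hφ.apply_of_mem_star (hS hv)
    · exact hφ.apply_of_notMem hv

lemma mul (hφ : IsPartialConj G w S φ) (hψ : IsPartialConj G w S' ψ) (h : Disjoint S S') :
    IsPartialConj G w (S ∪ S') (φ * ψ) := by
  refine ⟨fun v hv => ?_, fun v hv => ?_⟩ <;> rw [MulAut.mul_apply]
  · rcases hv with hv | hv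
    · rw [hψ.apply_of_notMem (Set.disjoint_left.mp h hv), hφ.apply_of_mem hv]
    · rw [hψ.apply_of_mem hv, map_mul, map_mul, map_inv, hφ.apply_self,
        hφ.apply_of_notMem (Set.disjoint_right.mp h hv)]
  · rw [hψ.apply_of_notMem fun h' => hv (Or.inr h'), hφ.apply_of_notMem fun h' => hv (Or.inl h')]

lemma toOut_mul_compl (hφ : IsPartialConj G w S φ)
    (hψ : IsPartialConj G w ((star G w)ᶜ \ S) ψ) : toOut (Raag G) φ * toOut (Raag G) ψ = 1 := by
  rw [← map_mul]
  refine (hφ.mul hψ Set.disjoint_sdiff_right).toOut_eq_one fun v hv => ?_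
  by_cases h : v ∈ S
  exacts [Or.inl h, Or.inr ⟨hv, h⟩]

end IsPartialConj

section Commutation

variable {y w : V} {E D : Set V} {t p : MulAut (Raag G)}

lemma commute_partialConj_of_notMem (ht : IsPartialConj G y E t) (hp : IsPartialConj G w D p)
    (hwE : w ∉ E) (hyD : y ∉ D) (h : y ∈ star G w ∨ Disjoint E D) : Commute t p := by
  refine mulAut_ext fun z => ?_
  rw [MulAut.mul_apply, MulAut.mul_apply]
  by_cases hzE : z ∈ E <;> by_cases hzD : z ∈ D
  · have hyw : Commute (gen G y) (gen G w) := (commute_gen_of_mem_star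
      (h.resolve_right fun hED => Set.disjoint_left.mp hED hzE hzD)).symm
    simp only [hp.apply_of_mem hzD, ht.apply_of_mem hzE, map_mul, map_inv,
      ht.apply_of_notMem hwE, hp.apply_of_notMem hyD]
    calc _ = (gen G y * gen G w)⁻¹ * gen G z * (gen G y * gen G w) := by group
      _ = (gen G w * gen G y)⁻¹ * gen G z * (gen G w * gen G y) := by rw [hyw.eq]
      _ = _ := by group
  · simp only [hp.apply_of_notMem hzD, ht.apply_of_mem hzE, map_mul, map_inv,
      hp.apply_of_notMem hyD]
  · simp only [hp.apply_of_mem hzD, ht.apply_of_notMem hzE, map_mul, map_inv,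
      ht.apply_of_notMem hwE]
  · simp only [hp.apply_of_notMem hzD, ht.apply_of_notMem hzE]

lemma commute_partialConj_of_subset (ht : IsPartialConj G y E t) (hp : IsPartialConj G w D p)
    (hwE : w ∉ E) (hyD : y ∈ D) (hED : E ⊆ D) : Commute t p := by
  refine mulAut_ext fun z => ?_
  rw [MulAut.mul_apply, MulAut.mul_apply]
  by_cases hzE : z ∈ E
  · simp only [hp.apply_of_mem (hED hzE), ht.apply_of_mem hzE, map_mul, map_inv,
      ht.apply_of_notMem hwE, hp.apply_of_mem hyD]
    group
  by_cases hzD : z ∈ D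
  · simp only [hp.apply_of_mem hzD, ht.apply_of_notMem hzE, map_mul, map_inv,
      ht.apply_of_notMem hwE]
  · simp only [hp.apply_of_notMem hzD, ht.apply_of_notMem hzE]

end Commutation

namespace IsTransvection

variable {u v w z : V} {S D : Set V} {t p q : MulAut (Raag G)}

lemma apply_of_ne (ht : IsTransvection G u v t) (hz : z ≠ u) : t (gen G z) = gen G z :=
  ht.2 z hz

lemma commute_partialConj (ht : IsTransvection G u v t) (hp : IsPartialConj G w D p)
    (hwu : w ≠ u) (hvD : v ∈ D → u ∈ D) (huD : u ∈ D → v ∈ D ∨ v ∈ star G w) :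
    Commute t p := by
  refine mulAut_ext fun z => ?_
  rw [MulAut.mul_apply, MulAut.mul_apply]
  rcases eq_or_ne z u with rfl | hzu
  · by_cases hzD : z ∈ D
    · rcases huD hzD with hv | hv
      · simp only [hp.apply_of_mem hzD, ht.1, map_mul, map_inv, ht.apply_of_ne hwu,
          hp.apply_of_mem hv]
        group
      · simp only [hp.apply_of_mem hzD, ht.1, map_mul, map_inv, ht.apply_of_ne hwu,
          hp.apply_of_mem_star hv, mul_assoc, (commute_gen_of_mem_star hv).eq]
    · simp only [hp.apply_of_notMem hzD, ht.1, map_mul, hp.apply_of_notMem (mt hvD hzD)]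
  · by_cases hzD : z ∈ D
    · simp only [hp.apply_of_mem hzD, map_mul, map_inv, ht.apply_of_ne hwu, ht.apply_of_ne hzu]
    · simp only [hp.apply_of_notMem hzD, ht.apply_of_ne hzu]

lemma commute_partialConj_right (ht : IsTransvection G u v t) (hq : IsPartialConj G v S q)
    (hvu : v ≠ u) : Commute t q := by
  refine mulAut_ext fun z => ?_
  rw [MulAut.mul_apply, MulAut.mul_apply]
  by_cases hzS : z ∈ S
  · rcases eq_or_ne z u with rfl | hzu
    · simp only [hq.apply_of_mem hzS, ht.1, map_mul, map_inv, ht.apply_of_ne hvu, hq.apply_self]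
      group
    · simp only [hq.apply_of_mem hzS, map_mul, map_inv, ht.apply_of_ne hvu, ht.apply_of_ne hzu]
  · rcases eq_or_ne z u with rfl | hzu
    · simp only [hq.apply_of_notMem hzS, ht.1, map_mul, hq.apply_self]
    · simp only [hq.apply_of_notMem hzS, ht.apply_of_ne hzu]

lemma mul_partialConj_of_notMem (ht : IsTransvection G u v t) (hp : IsPartialConj G u D p)
    (hq : IsPartialConj G v D q) (hvu : v ≠ u) (huD : u ∉ D) (hvD : v ∉ D) :
    t * p = p * q * t := by
  refine mulAut_ext fun z => ?_
  rw [MulAut.mul_apply, MulAut.mul_apply, MulAut.mul_apply]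
  rcases eq_or_ne z u with rfl | hzu
  · simp only [hp.apply_of_notMem huD, ht.1, map_mul, hq.apply_of_notMem huD,
      hq.apply_of_notMem hvD, hp.apply_of_notMem hvD]
  by_cases hzD : z ∈ D
  · simp only [hp.apply_of_mem hzD, map_mul, map_inv, ht.1, ht.apply_of_ne hzu,
      hq.apply_of_mem hzD, hp.apply_of_notMem hvD]
    group
  · simp only [hp.apply_of_notMem hzD, ht.apply_of_ne hzu, hq.apply_of_notMem hzD]

lemma mul_partialConj_of_mem (ht : IsTransvection G u v t) (hp : IsPartialConj G u D p)
    (hq : IsPartialConj G v (insert u D) q) (hvu : v ≠ u) (huD : u ∉ D) (hvD : v ∈ D) :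
    t * p = q * p * t := by
  refine mulAut_ext fun z => ?_
  rw [MulAut.mul_apply, MulAut.mul_apply, MulAut.mul_apply]
  rcases eq_or_ne z u with rfl | hzu
  · simp only [hp.apply_of_notMem huD, ht.1, map_mul, map_inv, hp.apply_of_mem hvD,
      hq.apply_of_mem (Set.mem_insert z D), hq.apply_of_mem (Set.mem_insert_of_mem z hvD)]
    group
  by_cases hzD : z ∈ D
  · simp only [hp.apply_of_mem hzD, map_mul, map_inv, ht.1, ht.apply_of_ne hzu,
      hq.apply_of_mem (Set.mem_insert_of_mem u hzD), hq.apply_of_mem (Set.mem_insert u D)]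
    group
  · simp only [hp.apply_of_notMem hzD, ht.apply_of_ne hzu,
      hq.apply_of_notMem fun h => (Set.mem_insert_iff.mp h).elim hzu hzD]

end IsTransvection

namespace HasNoSIL

variable {x y u v w : V} {X C D E : Set V} {t p : MulAut (Raag G)}

lemma commute_toOut_partialConj (hG : HasNoSIL G) (hE : IsUnionCC G y E)
    (hD : IsUnionCC G w D) (ht : IsPartialConj G y E t) (hp : IsPartialConj G w D p) :
    Commute (toOut (Raag G) t) (toOut (Raag G) p) := by
  have key : ∀ {E' t'}, IsUnionCC G y E' → IsPartialConj G y E' t' → w ∉ E' → Commute t' p := by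
    intro E' t' hE' ht' hwE'
    by_cases hyw : y ∈ star G w
    · exact commute_partialConj_of_notMem ht' hp hwE' (fun h => hD.subset h hyw) (Or.inl hyw)
    by_cases hyD : y ∈ D
    · exact commute_partialConj_of_subset ht' hp hwE' hyD (hG.subset_of_mem hyw hE' hD hwE' hyD)
    · exact commute_partialConj_of_notMem ht' hp hwE' hyD
        (Or.inr (hG.disjoint_of_notMem hyw hE' hD hwE' hyD))
  by_cases hwE : w ∈ E
  · -- in `Out`, `π^y_E` is inverse to the partial conjugation on the complementary `y`-components
    obtain ⟨t₂, ht₂⟩ := exists_isPartialConj hE.compl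
    rw [eq_inv_of_mul_eq_one_left (ht.toOut_mul_compl ht₂)]
    exact ((key hE.compl ht₂ fun h => h.2 hwE).map (toOut (Raag G))).inv_left
  · exact (key hE ht hwE).map (toOut (Raag G))

lemma commute_transvection_partialConj (hG : HasNoSIL G) (hC : IsCC G (star G x)ᶜ C)
    (hxw : Dom G x w) (ht : IsTransvection G u v t) (huv : Dom G u v) (hwu : w ≠ u)
    (hp : IsPartialConj G w (C \ star G w) p) : Commute t p := by
  refine ht.commute_partialConj hp hwu (fun hv => ?_) (fun hu => ?_)
  · have hu : u ∉ star G w := huv.notMem_star hv.2 hwu.symm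
    rcases eq_or_ne u x with rfl | hux
    · exact absurd (hG.mem_star_of_mem_of_dom_of_dom hC huv hv.1 hxw hu) hv.2
    · exact ⟨hG.mem_isCC_of_dom_of_mem_right hC huv hv.1 hux, hu⟩
  · by_cases hvw : v ∈ star G w
    · exact Or.inr hvw
    refine Or.inl ⟨?_, hvw⟩
    rcases eq_or_ne v x with rfl | hvx
    · exact absurd (hG.mem_star_of_mem_of_dom_trans hC huv hu.1 hxw hvw) hu.2
    · exact hG.mem_isCC_of_dom_of_mem_left hC huv hu.1 (hxw.notMem_star_of_notMem_star hvw hvx)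

lemma transvection_conj_mem_of_mem {H : Subgroup (Out (Raag G))} {q : MulAut (Raag G)}
    (hG : HasNoSIL G) (hC : IsCC G (star G x)ᶜ C) (ht : IsTransvection G w v t)
    (hwv : Dom G w v) (hne : w ≠ v) (hp : IsPartialConj G w (C \ star G w) p)
    (hq : IsPartialConj G v (C \ star G v) q) (hPH : toOut (Raag G) p ∈ H)
    (hQH : toOut (Raag G) q ∈ H) (hvD : v ∈ C \ star G w) :
    toOut (Raag G) t * toOut (Raag G) p * (toOut (Raag G) t)⁻¹ ∈ H ∧
      (toOut (Raag G) t)⁻¹ * toOut (Raag G) p * toOut (Raag G) t ∈ H := by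
  obtain ⟨q', hq', hQ'H⟩ : ∃ q', IsPartialConj G v (insert w (C \ star G w)) q' ∧
      toOut (Raag G) q' ∈ H := by
    rcases eq_or_ne w x with rfl | hwx
    · -- `insert w C` contains everything outside `st(v)`, so `π^v_{insert w C}` is inner
      refine ⟨_, IsPartialConj.of_conj fun z hz => ?_, by rw [toOut_conj]; exact one_mem _⟩
      rcases eq_or_ne z w with rfl | hzw
      · exact Set.mem_insert z _
      · have hzC := hG.mem_isCC_of_notMem_star hC hwv hvD.1 hz hzw
        exact Set.mem_insert_of_mem w ⟨hzC, hC.subset hzC⟩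
    · have hwC := hG.mem_isCC_of_dom_of_mem_right hC hwv hvD.1 hwx
      refine ⟨q, hq.congr_set fun z hz => ?_, hQH⟩
      rcases eq_or_ne z w with rfl | hzw
      · exact iff_of_true ⟨hwC, hz⟩ (Set.mem_insert z _)
      · rw [Set.mem_insert_iff, or_iff_right hzw, mem_diff_star_iff_of_dom hwv hz hzw]
  have hrel := congrArg (toOut (Raag G))
    (ht.mul_partialConj_of_mem hp hq' hne.symm (fun h => h.2 (self_mem_star w)) hvD)
  simp only [map_mul] at hrel
  refine conj_mem_of_mul_eq hPH hQ'H (one_mem _)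
    ((ht.commute_partialConj_right hq' hne.symm).map _) (Commute.one_right _) ?_
  rw [hrel, mul_one]

lemma transvection_conj_mem_of_notMem {H : Subgroup (Out (Raag G))} {q : MulAut (Raag G)}
    (hG : HasNoSIL G) (hC : IsCC G (star G x)ᶜ C) (hxw : Dom G x w)
    (ht : IsTransvection G w v t) (hwv : Dom G w v) (hne : w ≠ v)
    (hp : IsPartialConj G w (C \ star G w) p) (hq : IsPartialConj G v (C \ star G v) q)
    (hPH : toOut (Raag G) p ∈ H) (hQH : toOut (Raag G) q ∈ H) (hvD : v ∉ C \ star G w) :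
    toOut (Raag G) t * toOut (Raag G) p * (toOut (Raag G) t)⁻¹ ∈ H ∧
      (toOut (Raag G) t)⁻¹ * toOut (Raag G) p * toOut (Raag G) t ∈ H := by
  by_cases hwC : w ∈ C ∧ w ∉ star G v
  · -- then `v = x` and `C = {w}`, so that `π^w_{C∖st(w)}` is trivial
    have hvw : v ∉ star G w := fun h => hwC.2 (mem_star_comm.mp h)
    rcases eq_or_ne v x with rfl | hvx
    · have hp1 := hp.eq_one fun z hz => by
        obtain rfl := hC.subset_singleton_of_dom hwC.1 hwv hz.1
        exact self_mem_star z
      rw [hp1, map_one]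
      exact conj_mem_of_commute (Commute.one_right _) (one_mem _)
    · exact absurd ⟨hG.mem_isCC_of_dom_of_mem_left hC hwv hwC.1
        (hxw.notMem_star_of_notMem_star hvw hvx), hvw⟩ hvD
  have hqD : IsPartialConj G v (C \ star G w) q := by
    refine hq.congr_set fun z hz => ?_
    rcases eq_or_ne z w with rfl | hzw
    · exact iff_of_false (fun h => hwC ⟨h.1, hz⟩) fun h => h.2 (self_mem_star z)
    · exact mem_diff_star_iff_of_dom hwv hz hzw
  have hrel := congrArg (toOut (Raag G))
    (ht.mul_partialConj_of_notMem hp hqD hne.symm (fun h => h.2 (self_mem_star w)) hvD)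
  simp only [map_mul] at hrel
  refine conj_mem_of_mul_eq hPH (one_mem _) hQH (Commute.one_right _)
    ((ht.commute_partialConj_right hq hne.symm).map _) ?_
  rw [hrel, one_mul]

lemma transvection_conj_mem (hG : HasNoSIL G) (hC : IsCC G (star G x)ᶜ C) (hxX : x ∈ X)
    (hdom : ∀ x' ∈ X, Dom G x' w) (ht : IsTransvection G w v t) (hwv : Dom G w v) (hne : w ≠ v)
    (hp : IsPartialConj G w (C \ star G w) p) :
    toOut (Raag G) t * toOut (Raag G) p * (toOut (Raag G) t)⁻¹ ∈ Subgroup.closure (PXC G X C) ∧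
      (toOut (Raag G) t)⁻¹ * toOut (Raag G) p * toOut (Raag G) t ∈
        Subgroup.closure (PXC G X C) := by
  have hxw := hdom x hxX
  obtain ⟨q, hq⟩ := exists_isPartialConj (isUnionCC_diff_star hC (hxw.trans hwv))
  have hPH := Subgroup.subset_closure (k := PXC G X C) ⟨w, p, hdom, hp, rfl⟩
  have hQH := Subgroup.subset_closure (k := PXC G X C)
    ⟨v, q, fun x' hx' => (hdom x' hx').trans hwv, hq, rfl⟩
  by_cases hvD : v ∈ C \ star G w
  · exact hG.transvection_conj_mem_of_mem hC ht hwv hne hp hq hPH hQH hvD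
  · exact hG.transvection_conj_mem_of_notMem hC hxw ht hwv hne hp hq hPH hQH hvD

end HasNoSIL

end RaagPaper

open RaagPaper in
theorem statement17_general {V : Type} (G : SimpleGraph V)
    (hnosil : HasNoSIL G) (X C : Set V)
    (hXC : ∃ x ∈ X, IsCC G ((star G x)ᶜ) C) :
    Subgroup.closure (PXC G X C) ≤ SOut0 G ∧
    ((Subgroup.closure (PXC G X C)).subgroupOf (SOut0 G)).Normal := by
  obtain ⟨x, hxX, hC⟩ := hXC
  have hle : Subgroup.closure (PXC G X C) ≤ SOut0 G := (Subgroup.closure_le _).mpr <| by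
    rintro _ ⟨w, p, hw, hp, rfl⟩
    exact Subgroup.subset_closure ⟨p, rfl, Or.inr ⟨w, _, isUnionCC_diff_star hC (hw x hxX), hp⟩⟩
  refine ⟨hle, (Subgroup.normal_subgroupOf_iff_le_normalizer hle).mpr <|
    (Subgroup.closure_le _).mpr ?_⟩
  rintro _ ⟨t, rfl, ht⟩
  refine mem_normalizer_closure ?_
  rintro _ ⟨w, p, hw, hp, rfl⟩
  have hPH : toOut (Raag G) p ∈ Subgroup.closure (PXC G X C) :=
    Subgroup.subset_closure ⟨w, p, hw, hp, rfl⟩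
  rcases ht with ⟨u, v, huv, hdom, ht⟩ | ⟨y, E, hE, ht⟩
  · rcases eq_or_ne w u with rfl | hwu
    · exact hnosil.transvection_conj_mem hC hxX hw ht hdom huv hp
    · exact conj_mem_of_commute
        ((hnosil.commute_transvection_partialConj hC (hw x hxX) ht hdom hwu hp).map _) hPH
  · exact conj_mem_of_commute
      (hnosil.commute_toOut_partialConj hE (isUnionCC_diff_star hC (hw x hxX)) ht hp) hPH

open RaagPaper in
/-- If `Γ` has no SIL, then for every equivalence class `X` and every
`X`-component `C`, the subgroup `A^X_C` of `Out(A_Γ)` generated by (the images of) the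
partial conjugations in `P^X_C` is a normal subgroup of `SOut⁰(A_Γ)`. -/
theorem statement17 {V : Type} [Fintype V] (G : SimpleGraph V)
    (hnosil : HasNoSIL G) (X C : Set V)
    (hX : ∃ x : V, X = eqClass G x)
    (hXC : ∃ x ∈ X, IsCC G ((star G x)ᶜ) C) :
    Subgroup.closure (PXC G X C) ≤ SOut0 G ∧
    ((Subgroup.closure (PXC G X C)).subgroupOf (SOut0 G)).Normal :=
  statement17_general G hnosil X C hXC
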